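/- Assume ν = 2κλ/θ² > 1/2. There exists a constant c depending only on κ, λ, θ, v₀, T such that for every partition 0 = t₀ < ⋯ < t_N = T and every M > 0 one has P( v_N ≥ M ) ≤ c · exp( −(2κ/θ²) M ). -/

import Mathlib

open MeasureTheory ProbabilityTheory
open scoped ENNReal NNReal

noncomputable section

variable {Ω : Type*} [MeasurableSpace Ω]

/-- A standard Brownian motion (indexed by all of `ℝ`; only nonnegative times matter):
it starts at `0`, has Gaussian increments with the correct variance, and has independent
increments. -/
structure IsBrownian (P : Measure Ω) (W : ℝ → Ω → ℝ) : Prop where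
  meas : ∀ s : ℝ, Measurable (W s)
  start : ∀ ω, W 0 ω = 0
  gauss : ∀ s t : ℝ, 0 ≤ s → s ≤ t →
    Measure.map (fun ω => W t ω - W s ω) P = gaussianReal 0 (Real.toNNReal (t - s))
  indep : ∀ u : ℕ → ℝ, Monotone u →
    iIndepFun (fun k ω => W (u (k + 1)) ω - W (u k) ω) P

/-- A partition `0 = t₀ < t₁ < ⋯ < t_N = T` of `[0, T]`. -/
structure IsPartition (t : ℕ → ℝ) (N : ℕ) (T : ℝ) : Prop where
  zero : t 0 = 0
  last : t N = T
  lt : ∀ k < N, t k < t (k + 1)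

/-- The mesh `Δ = max_{1 ≤ k ≤ N} (t_k - t_{k-1})` of a partition. -/
def mesh (t : ℕ → ℝ) (N : ℕ) : ℝ := ⨆ k ∈ Finset.range N, (t (k + 1) - t k)

/-- The drift-implicit Milstein scheme `v_n` for the CIR process (closed form). -/
def milstein (κ lam θ v₀ : ℝ) (t : ℕ → ℝ) (W : ℝ → Ω → ℝ) : ℕ → Ω → ℝ
  | 0 => fun _ => v₀
  | n + 1 => fun ω =>
      (1 / (1 + κ * (t (n + 1) - t n))) *
        ((Real.sqrt (milstein κ lam θ v₀ t W n ω)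
            + (θ / 2) * (W (t (n + 1)) ω - W (t n) ω)) ^ 2
          + (κ * lam - θ ^ 2 / 4) * (t (n + 1) - t n))

/-- `n(s)`: the index of the largest partition point `≤ s`. -/
def nIdx (t : ℕ → ℝ) (N : ℕ) (s : ℝ) : ℕ := Nat.findGreatest (fun n => t n ≤ s) N

/-- `η(s)`: the largest partition point `≤ s`. -/
def eta (t : ℕ → ℝ) (N : ℕ) (s : ℝ) : ℝ := t (nIdx t N s)

/-- `ṽ_s`: the interpolation of the Milstein scheme before the implicit-drift division. -/
def tildeV (κ lam θ v₀ : ℝ) (t : ℕ → ℝ) (N : ℕ) (W : ℝ → Ω → ℝ) (s : ℝ) (ω : Ω) : ℝ :=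
  milstein κ lam θ v₀ t W (nIdx t N s) ω + κ * lam * (s - eta t N s)
    + θ * Real.sqrt (milstein κ lam θ v₀ t W (nIdx t N s) ω) * (W s ω - W (eta t N s) ω)
    + (θ ^ 2 / 4) * ((W s ω - W (eta t N s) ω) ^ 2 - (s - eta t N s))

/-- `v̂_s`: the continuous-time interpolation of the Milstein scheme. -/
def hatV (κ lam θ v₀ : ℝ) (t : ℕ → ℝ) (N : ℕ) (W : ℝ → Ω → ℝ) (s : ℝ) (ω : Ω) : ℝ :=
  tildeV κ lam θ v₀ t N W s ω / (1 + κ * (s - eta t N s))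


open Real

/-! With `a = 2κ/θ²` and `b = κλ - θ²/4`, one step of the scheme maps `v` to
`((√v + (θ/2)ΔW)² + bΔ)/(1 + κΔ)`, and `b ≥ 0` means `ν ≥ 1/2`. For `ΔW ~ N(0, Δ)`
independent of `v`, the Gaussian integral gives exactly
`E[exp(a v_{n+1}) | v_n] = √(1 + κΔ) · exp(abΔ/(1 + κΔ)) · exp(a v_n)`: the value of `a` is the
one for which the exponential moment of the square reproduces `exp(a v_n)`. Hence
`E exp(a v_n) ≤ exp(a v₀ + (κ/2 + ab) t_n)`, and Markov's inequality for `exp(a v_N)` gives the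
tail bound with `c = exp(a v₀ + (κ/2 + ab) T)`. -/

theorem lintegral_exp_quadratic {A : ℝ} (hA : A < 0) (B C : ℝ) :
    ∫⁻ y : ℝ, ENNReal.ofReal (exp (A * y ^ 2 + B * y + C))
      = ENNReal.ofReal (√(π / -A) * exp (C - B ^ 2 / (4 * A))) := by
  have hsq (y : ℝ) : exp (A * y ^ 2 + B * y + C)
      = exp (-(-A) * (y + B / (2 * A)) ^ 2) * exp (C - B ^ 2 / (4 * A)) := by
    have := hA.ne
    rw [← exp_add]
    congr 1
    field_simp
    ring
  simp_rw [hsq, ENNReal.ofReal_mul (exp_pos _).le]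
  rw [lintegral_mul_const _ (by fun_prop),
    lintegral_add_right_eq_self (fun y ↦ ENNReal.ofReal (exp (-(-A) * y ^ 2))),
    ← ofReal_integral_eq_lintegral_ofReal (integrable_exp_neg_mul_sq (neg_pos.mpr hA))
      (.of_forall fun _ ↦ (exp_pos _).le), integral_gaussian, ENNReal.ofReal_mul (sqrt_nonneg _)]

theorem lintegral_exp_mul_sq_affine_gaussianReal {w : ℝ≥0} (hw : w ≠ 0) {c : ℝ} (m σ : ℝ)
    (hc : 2 * c * σ ^ 2 * w < 1) :
    ∫⁻ y, ENNReal.ofReal (exp (c * (m + σ * y) ^ 2)) ∂gaussianReal 0 w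
      = ENNReal.ofReal (exp (c * m ^ 2 / (1 - 2 * c * σ ^ 2 * w)) / √(1 - 2 * c * σ ^ 2 * w)) := by
  have hw' : (0 : ℝ) < w := by positivity
  obtain ⟨u, hu, hcw⟩ : ∃ u, 0 < u ∧ 2 * c * σ ^ 2 * w = 1 - u :=
    ⟨1 - 2 * c * σ ^ 2 * w, by linarith, by ring⟩
  have hA' : c * σ ^ 2 - 1 / (2 * w) = -u / (2 * w) := by
    field_simp
    linear_combination hcw
  have hA : c * σ ^ 2 - 1 / (2 * w) < 0 := by
    rw [hA']
    exact div_neg_of_neg_of_pos (neg_neg_of_pos hu) (by positivity)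
  have hdens (y : ℝ) : gaussianPDF 0 w y * ENNReal.ofReal (exp (c * (m + σ * y) ^ 2))
      = ENNReal.ofReal ((√(2 * π * w))⁻¹ *
          exp ((c * σ ^ 2 - 1 / (2 * w)) * y ^ 2 + 2 * c * m * σ * y + c * m ^ 2)) := by
    rw [gaussianPDF, gaussianPDFReal, ← ENNReal.ofReal_mul (by positivity), mul_assoc,
      ← exp_add]
    congr 3
    field_simp
    ring
  rw [gaussianReal_of_var_ne_zero _ hw,
    lintegral_withDensity_eq_lintegral_mul _ (measurable_gaussianPDF _ _) (by fun_prop)]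
  simp_rw [Pi.mul_apply, hdens, ENNReal.ofReal_mul (inv_nonneg.mpr (sqrt_nonneg _))]
  rw [lintegral_const_mul _ (by fun_prop), lintegral_exp_quadratic hA,
    ← ENNReal.ofReal_mul (by positivity)]
  congr 1
  have hπ : π / -(-u / (2 * w)) = 2 * π * w / u := by
    field_simp
  have hexp : c * m ^ 2 - (2 * c * m * σ) ^ 2 / (4 * (-u / (2 * w))) = c * m ^ 2 / u := by
    field_simp
    linear_combination (4 * c * m ^ 2) * hcw
  rw [hA', hπ, hexp, show 1 - 2 * c * σ ^ 2 * w = u by linarith, sqrt_div (by positivity)]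
  field_simp

theorem ProbabilityTheory.iIndepFun.indepFun_comp_of_dependsOn {ι β γ : Type*}
    [MeasurableSpace β] [MeasurableSpace γ] [Inhabited β] {P : Measure Ω} {g : ι → Ω → β}
    (hg : iIndepFun g P) (hmeas : ∀ i, Measurable (g i)) {S : Finset ι} {F : (ι → β) → γ}
    (hF : Measurable F) (hdep : DependsOn F S) {i : ι} (hi : i ∉ S) :
    IndepFun (fun ω ↦ F (fun k ↦ g k ω)) (g i) P := by
  classical
  let extend (x : S → β) (k : ι) : β := if h : k ∈ S then x ⟨k, h⟩ else default
  have hextend : Measurable extend := measurable_pi_lambda _ fun k ↦ by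
    by_cases h : k ∈ S
    · simpa [extend, h] using measurable_pi_apply _
    · simp [extend, h]
  have hfun : (F ∘ extend) ∘ (fun ω (k : S) ↦ g k ω) = fun ω ↦ F (fun k ↦ g k ω) :=
    funext fun ω ↦ hdep fun k hk ↦ by simp [extend, Finset.mem_coe.1 hk]
  have := (hg.indepFun_finset S {i} (Finset.disjoint_singleton_right.2 hi) hmeas).comp
    (hF.comp hextend) (measurable_pi_apply ⟨i, Finset.mem_singleton_self i⟩)
  rwa [hfun] at this

theorem ProbabilityTheory.IndepFun.lintegral_comp_eq_lintegral_lintegral {α β : Type*}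
    [MeasurableSpace α] [MeasurableSpace β] {P : Measure Ω} [IsFiniteMeasure P]
    {X : Ω → α} {Y : Ω → β} (h : IndepFun X Y P) (hX : Measurable X) (hY : Measurable Y)
    {f : α × β → ℝ≥0∞} (hf : Measurable f) :
    ∫⁻ ω, f (X ω, Y ω) ∂P = ∫⁻ ω, ∫⁻ y, f (X ω, y) ∂(P.map Y) ∂P := by
  rw [← lintegral_map hf (hX.prodMk hY),
    (indepFun_iff_map_prod_eq_prod_map_map hX.aemeasurable hY.aemeasurable).1 h,
    lintegral_prod _ hf.aemeasurable, lintegral_map hf.lintegral_prod_right' hX]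

theorem measure_ge_le_exp_mul_lintegral_exp {P : Measure Ω} {X : Ω → ℝ} (hX : AEMeasurable X P)
    {a : ℝ} (ha : 0 ≤ a) (M : ℝ) :
    P {ω | M ≤ X ω}
      ≤ ENNReal.ofReal (exp (-(a * M))) * ∫⁻ ω, ENNReal.ofReal (exp (a * X ω)) ∂P := by
  calc P {ω | M ≤ X ω}
      ≤ P {ω | ENNReal.ofReal (exp (a * M)) ≤ ENNReal.ofReal (exp (a * X ω))} :=
        measure_mono fun ω (hω : M ≤ X ω) ↦
          ENNReal.ofReal_le_ofReal (exp_le_exp.2 (mul_le_mul_of_nonneg_left hω ha))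
    _ ≤ (∫⁻ ω, ENNReal.ofReal (exp (a * X ω)) ∂P) / ENNReal.ofReal (exp (a * M)) :=
        meas_ge_le_lintegral_div (by fun_prop) (by simp [exp_pos]) ENNReal.ofReal_ne_top
    _ = _ := by
        rw [ENNReal.div_eq_inv_mul, ← ENNReal.ofReal_inv_of_pos (exp_pos _), exp_neg]

theorem monotone_comp_min_of_le_succ {α : Type*} [Preorder α] {t : ℕ → α} {N : ℕ}
    (ht : ∀ k < N, t k ≤ t (k + 1)) : Monotone fun k ↦ t (min k N) :=
  monotone_nat_of_le_succ fun k ↦ by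
    rcases lt_or_ge k N with hk | hk
    · rw [min_eq_left hk.le, min_eq_left hk]
      exact ht k hk
    · rw [min_eq_right hk, min_eq_right (by omega)]

def milsteinStep (κ lam θ Δ v y : ℝ) : ℝ :=
  (1 / (1 + κ * Δ)) * ((√v + (θ / 2) * y) ^ 2 + (κ * lam - θ ^ 2 / 4) * Δ)

def milsteinOfIncrements (κ lam θ v₀ : ℝ) (t : ℕ → ℝ) : ℕ → (ℕ → ℝ) → ℝ
  | 0 => fun _ ↦ v₀
  | n + 1 => fun x ↦
      milsteinStep κ lam θ (t (n + 1) - t n) (milsteinOfIncrements κ lam θ v₀ t n x) (x n)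

section Scheme

variable {κ lam θ v₀ : ℝ} {t : ℕ → ℝ}

theorem milstein_succ {Ω : Type*} (W : ℝ → Ω → ℝ) (n : ℕ) (ω : Ω) :
    milstein κ lam θ v₀ t W (n + 1) ω = milsteinStep κ lam θ (t (n + 1) - t n)
      (milstein κ lam θ v₀ t W n ω) (W (t (n + 1)) ω - W (t n) ω) :=
  rfl

theorem milstein_eq_milsteinOfIncrements {Ω : Type*} (W : ℝ → Ω → ℝ) (n : ℕ) (ω : Ω) :
    milstein κ lam θ v₀ t W n ω
      = milsteinOfIncrements κ lam θ v₀ t n (fun k ↦ W (t (k + 1)) ω - W (t k) ω) := by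
  induction n with
  | zero => rfl
  | succ n ih => rw [milstein_succ, ih]; rfl

theorem dependsOn_milsteinOfIncrements (n : ℕ) :
    DependsOn (milsteinOfIncrements κ lam θ v₀ t n) (Set.Iio n) := by
  induction n with
  | zero => exact fun _ _ _ ↦ rfl
  | succ n ih =>
    intro x y hxy
    simp only [milsteinOfIncrements]
    rw [ih fun k hk ↦ hxy k (Set.mem_Iio.2 (Nat.lt_succ_of_lt hk)),
      hxy n (Set.mem_Iio.2 n.lt_succ_self)]

theorem measurable_milsteinOfIncrements (n : ℕ) :
    Measurable (milsteinOfIncrements κ lam θ v₀ t n) := by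
  induction n with
  | zero => exact measurable_const
  | succ n ih => simp only [milsteinOfIncrements, milsteinStep]; fun_prop

theorem milsteinStep_nonneg (hκ : 0 ≤ κ) (hb : 0 ≤ κ * lam - θ ^ 2 / 4) {Δ : ℝ} (hΔ : 0 ≤ Δ)
    (v y : ℝ) :
    0 ≤ milsteinStep κ lam θ Δ v y := by
  have : 0 ≤ κ * Δ := mul_nonneg hκ hΔ
  unfold milsteinStep
  positivity

theorem milstein_nonneg (hκ : 0 ≤ κ) (hb : 0 ≤ κ * lam - θ ^ 2 / 4) (hv₀ : 0 ≤ v₀)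
    {Ω : Type*} (W : ℝ → Ω → ℝ) {n : ℕ} (ht : ∀ k < n, t k ≤ t (k + 1)) (ω : Ω) :
    0 ≤ milstein κ lam θ v₀ t W n ω := by
  induction n with
  | zero => exact hv₀
  | succ n _ =>
    have hΔ : 0 ≤ t (n + 1) - t n := sub_nonneg.2 (ht n n.lt_succ_self)
    exact milsteinStep_nonneg hκ hb hΔ _ _

end Scheme

section Step

variable {κ lam θ : ℝ}

theorem lintegral_exp_milsteinStep_gaussianReal (hκ : 0 < κ) (hθ : θ ≠ 0) {Δ : ℝ} (hΔ : 0 < Δ)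
    {v : ℝ} (hv : 0 ≤ v) :
    ∫⁻ y, ENNReal.ofReal (exp (2 * κ / θ ^ 2 * milsteinStep κ lam θ Δ v y))
        ∂gaussianReal 0 Δ.toNNReal
      = ENNReal.ofReal (√(1 + κ * Δ)
          * exp (2 * κ / θ ^ 2 * (κ * lam - θ ^ 2 / 4) * Δ / (1 + κ * Δ))
          * exp (2 * κ / θ ^ 2 * v)) := by
  have h1 : 0 < 1 + κ * Δ := by positivity
  set c := 2 * κ / θ ^ 2 / (1 + κ * Δ) with hc
  have hsplit (y : ℝ) : exp (2 * κ / θ ^ 2 * milsteinStep κ lam θ Δ v y)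
      = exp (c * (√v + θ / 2 * y) ^ 2)
        * exp (2 * κ / θ ^ 2 * (κ * lam - θ ^ 2 / 4) * Δ / (1 + κ * Δ)) := by
    rw [milsteinStep, ← exp_add, hc]
    congr 1
    field_simp
  have hvar : 1 - 2 * c * (θ / 2) ^ 2 * Δ.toNNReal = 1 / (1 + κ * Δ) := by
    rw [Real.coe_toNNReal _ hΔ.le, hc]
    field_simp
    ring
  simp_rw [hsplit, ENNReal.ofReal_mul (exp_pos _).le]
  rw [lintegral_mul_const _ (by fun_prop), lintegral_exp_mul_sq_affine_gaussianReal (by simpa)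
    _ _ (by rw [← sub_pos, hvar]; positivity), hvar, sq_sqrt hv,
    ← ENNReal.ofReal_mul (by positivity)]
  congr 1
  rw [sqrt_div' _ h1.le, sqrt_one, hc]
  field_simp

theorem lintegral_exp_milsteinStep_le (hκ : 0 < κ) (hθ : θ ≠ 0) (hb : 0 ≤ κ * lam - θ ^ 2 / 4)
    {Δ : ℝ} (hΔ : 0 < Δ) {v : ℝ} (hv : 0 ≤ v) :
    ∫⁻ y, ENNReal.ofReal (exp (2 * κ / θ ^ 2 * milsteinStep κ lam θ Δ v y))
        ∂gaussianReal 0 Δ.toNNReal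
      ≤ ENNReal.ofReal (exp ((κ / 2 + 2 * κ / θ ^ 2 * (κ * lam - θ ^ 2 / 4)) * Δ))
        * ENNReal.ofReal (exp (2 * κ / θ ^ 2 * v)) := by
  rw [lintegral_exp_milsteinStep_gaussianReal hκ hθ hΔ hv,
    ← ENNReal.ofReal_mul (exp_pos _).le, add_mul, exp_add]
  gcongr
  · calc √(1 + κ * Δ) ≤ √(exp (κ * Δ)) := by gcongr; linarith [add_one_le_exp (κ * Δ)]
      _ = exp (κ / 2 * Δ) := by rw [← exp_half]; ring_nf
  · exact div_le_self (by positivity) (by nlinarith)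

end Step

section Brownian

variable {κ lam θ v₀ : ℝ} {t : ℕ → ℝ} {P : Measure Ω} {W : ℝ → Ω → ℝ}

theorem measurable_milstein (hW : ∀ s, Measurable (W s)) (n : ℕ) :
    Measurable (milstein κ lam θ v₀ t W n) := by
  simp_rw [funext (milstein_eq_milsteinOfIncrements W n)]
  exact (measurable_milsteinOfIncrements n).comp
    (measurable_pi_lambda _ fun k ↦ (hW _).sub (hW _))

theorem IsBrownian.indepFun_milstein_increment (hW : IsBrownian P W) {N : ℕ}
    (ht : ∀ k < N, t k ≤ t (k + 1)) {n : ℕ} (hn : n < N) :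
    IndepFun (milstein κ lam θ v₀ t W n) (fun ω ↦ W (t (n + 1)) ω - W (t n) ω) P := by
  -- `IsBrownian.indep` needs a monotone grid indexed by all of `ℕ`: freeze the partition at `t N`.
  have hindep := (hW.indep _ (monotone_comp_min_of_le_succ ht)).indepFun_comp_of_dependsOn
    (fun k ↦ (hW.meas _).sub (hW.meas _)) (measurable_milsteinOfIncrements n)
    (F := milsteinOfIncrements κ lam θ v₀ t n)
    (by rw [Finset.coe_range]; exact dependsOn_milsteinOfIncrements n) Finset.notMem_range_self
  convert hindep using 1 <;> funext ω
  · rw [milstein_eq_milsteinOfIncrements]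
    refine dependsOn_milsteinOfIncrements n fun k (hk : k < n) ↦ ?_
    rw [min_eq_left (by omega), min_eq_left (by omega)]
  · rw [min_eq_left hn.le, min_eq_left hn]

theorem IsBrownian.lintegral_exp_milstein_le [IsProbabilityMeasure P] (hW : IsBrownian P W)
    (hκ : 0 < κ) (hθ : θ ≠ 0) (hb : 0 ≤ κ * lam - θ ^ 2 / 4) (hv₀ : 0 ≤ v₀) {N : ℕ}
    (ht₀ : t 0 = 0) (ht : ∀ k < N, t k < t (k + 1)) {n : ℕ} (hn : n ≤ N) :
    ∫⁻ ω, ENNReal.ofReal (exp (2 * κ / θ ^ 2 * milstein κ lam θ v₀ t W n ω)) ∂P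
      ≤ ENNReal.ofReal
          (exp (2 * κ / θ ^ 2 * v₀ + (κ / 2 + 2 * κ / θ ^ 2 * (κ * lam - θ ^ 2 / 4)) * t n)) := by
  induction n with
  | zero => simp [milstein, ht₀]
  | succ n ih =>
    set d := κ / 2 + 2 * κ / θ ^ 2 * (κ * lam - θ ^ 2 / 4)
    have hΔ : 0 < t (n + 1) - t n := sub_pos.2 (ht n hn)
    have ht' : ∀ k < N, t k ≤ t (k + 1) := fun k hk ↦ (ht k hk).le
    have htn : 0 ≤ t n := by
      simpa [ht₀, min_eq_left (by omega : n ≤ N)]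
        using monotone_comp_min_of_le_succ ht' (Nat.zero_le n)
    calc ∫⁻ ω, ENNReal.ofReal (exp (2 * κ / θ ^ 2 * milstein κ lam θ v₀ t W (n + 1) ω)) ∂P
        = ∫⁻ ω, ∫⁻ y, ENNReal.ofReal (exp (2 * κ / θ ^ 2 *
            milsteinStep κ lam θ (t (n + 1) - t n) (milstein κ lam θ v₀ t W n ω) y))
              ∂gaussianReal 0 (t (n + 1) - t n).toNNReal ∂P := by
          simp_rw [milstein_succ]
          rw [(hW.indepFun_milstein_increment ht' hn).lintegral_comp_eq_lintegral_lintegral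
            (measurable_milstein hW.meas n) ((hW.meas _).sub (hW.meas _))
            (f := fun p ↦ ENNReal.ofReal (exp (2 * κ / θ ^ 2 *
              milsteinStep κ lam θ (t (n + 1) - t n) p.1 p.2))) (by unfold milsteinStep; fun_prop),
            hW.gauss _ _ htn (ht n hn).le]
      _ ≤ ∫⁻ ω, ENNReal.ofReal (exp (d * (t (n + 1) - t n)))
            * ENNReal.ofReal (exp (2 * κ / θ ^ 2 * milstein κ lam θ v₀ t W n ω)) ∂P :=
          lintegral_mono fun ω ↦ lintegral_exp_milsteinStep_le hκ hθ hb hΔ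
            (milstein_nonneg hκ.le hb hv₀ W (fun k hk ↦ ht' k (by omega)) ω)
      _ ≤ ENNReal.ofReal (exp (d * (t (n + 1) - t n)))
            * ENNReal.ofReal (exp (2 * κ / θ ^ 2 * v₀ + d * t n)) := by
          rw [lintegral_const_mul _
            ((measurable_milstein hW.meas n).const_mul _).exp.ennreal_ofReal]
          gcongr
          exact ih (by omega)
      _ = ENNReal.ofReal (exp (2 * κ / θ ^ 2 * v₀ + d * t (n + 1))) := by
          rw [← ENNReal.ofReal_mul (exp_pos _).le, ← exp_add]
          congr 2
          ring

end Brownian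

theorem statement15_general
    {Ω : Type*} [MeasurableSpace Ω] (P : Measure Ω) [IsProbabilityMeasure P]
    (W : ℝ → Ω → ℝ) (hW : IsBrownian P W)
    (κ lam θ v₀ T : ℝ)
    (hκ : 0 < κ) (hθ : 0 < θ) (hv₀ : 0 < v₀)
    (hFeller : 1 / 2 < 2 * κ * lam / θ ^ 2) :
    ∃ c : ℝ, ∀ (N : ℕ) (t : ℕ → ℝ), IsPartition t N T → ∀ M : ℝ, 0 < M →
      P {ω | M ≤ milstein κ lam θ v₀ t W N ω}
        ≤ ENNReal.ofReal (c * Real.exp (-(2 * κ / θ ^ 2) * M)) := by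
  have hb : 0 ≤ κ * lam - θ ^ 2 / 4 := by
    rw [lt_div_iff₀ (by positivity)] at hFeller
    linarith
  refine ⟨exp (2 * κ / θ ^ 2 * v₀ + (κ / 2 + 2 * κ / θ ^ 2 * (κ * lam - θ ^ 2 / 4)) * T),
    fun N t ht M _ ↦ ?_⟩
  have hmoment := hW.lintegral_exp_milstein_le hκ hθ.ne' hb hv₀.le ht.zero ht.lt le_rfl
  rw [ht.last] at hmoment
  calc P {ω | M ≤ milstein κ lam θ v₀ t W N ω}
      ≤ ENNReal.ofReal (exp (-(2 * κ / θ ^ 2 * M)))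
          * ∫⁻ ω, ENNReal.ofReal (exp (2 * κ / θ ^ 2 * milstein κ lam θ v₀ t W N ω)) ∂P :=
        measure_ge_le_exp_mul_lintegral_exp (measurable_milstein hW.meas N).aemeasurable
          (by positivity) M
    _ ≤ _ := by
        grw [hmoment, ← ENNReal.ofReal_mul (exp_pos _).le, mul_comm, neg_mul]

/-- under `ν = 2κλ/θ² > 1/2`, there is a constant `c` depending only on
`κ, λ, θ, v₀, T` such that for every partition and every `M > 0` the drift-implicit Milstein
scheme satisfies the tail bound `P(v_N ≥ M) ≤ c exp(-(2κ/θ²)M)`. -/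
theorem statement15
    {Ω : Type*} [MeasurableSpace Ω] (P : Measure Ω) [IsProbabilityMeasure P]
    (W : ℝ → Ω → ℝ) (hW : IsBrownian P W)
    (κ lam θ v₀ T : ℝ)
    (hκ : 0 < κ) (hlam : 0 < lam) (hθ : 0 < θ) (hv₀ : 0 < v₀) (hT : 0 < T)
    (hFeller : 1 / 2 < 2 * κ * lam / θ ^ 2) :
    ∃ c : ℝ, ∀ (N : ℕ) (t : ℕ → ℝ), IsPartition t N T → ∀ M : ℝ, 0 < M →
      P {ω | M ≤ milstein κ lam θ v₀ t W N ω}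
        ≤ ENNReal.ofReal (c * Real.exp (-(2 * κ / θ ^ 2) * M)) :=
  statement15_general P W hW κ lam θ v₀ T hκ hθ hv₀ hFeller
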